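/- arXiv:2301.03393 — 4 statements merged into one kernel-verified Lean document; each statement's English description precedes it below -/
import Mathlib

section
/- Discrete Poincaré inequality: There exists a constant C > 0 such that for every u in R^{M×N}, the Euclidean norm of u minus its mean (times the all-ones matrix) is bounded by C times the isotropic total variation of u, i.e., ‖u - ū·𝟙‖₂ ≤ C‖∇u‖_{2,1}, where ū = (1/MN)∑_{i,j} u_{i,j}. -/
open scoped BigOperators

noncomputable def gradx {M N : ℕ} [NeZero N] (u : Matrix (Fin M) (Fin N) ℝ)
    (i : Fin M) (j : Fin N) : ℝ := u i j - u i (j - 1)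

noncomputable def grady {M N : ℕ} [NeZero M] (u : Matrix (Fin M) (Fin N) ℝ)
    (i : Fin M) (j : Fin N) : ℝ := u i j - u (i - 1) j

/-- Isotropic total variation ‖∇u‖_{2,1}. -/
noncomputable def isoTV {M N : ℕ} [NeZero M] [NeZero N]
    (u : Matrix (Fin M) (Fin N) ℝ) : ℝ :=
  ∑ i, ∑ j, Real.sqrt ((gradx u i j) ^ 2 + (grady u i j) ^ 2)

/-- Frobenius (Euclidean) norm of a matrix. -/
noncomputable def norm2 {M N : ℕ} (u : Matrix (Fin M) (Fin N) ℝ) : ℝ :=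
  Real.sqrt (∑ i, ∑ j, (u i j) ^ 2)

/-!
Any two entries of `u` are joined by a path that runs cyclically first along a row and then
along a column. By the triangle inequality their difference is bounded by the sum of all
horizontal plus the sum of all vertical differences, each of which is at most `‖∇u‖_{2,1}`.
Hence every entry lies within `2‖∇u‖_{2,1}` of the mean, and summing squares over the `MN`
entries gives the inequality with `C = 2√(MN)`.
-/

open Finset

open Fin.NatCast in
theorem Fin.dist_le_sum_dist_sub_one {α : Type*} [PseudoMetricSpace α] {N : ℕ} [NeZero N]
    (f : Fin N → α) (a b : Fin N) : dist (f b) (f a) ≤ ∑ j, dist (f (j - 1)) (f j) := by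
  set g : Fin N → ℝ := fun j => dist (f (j - 1)) (f j)
  have hpath := dist_le_range_sum_dist (fun k : ℕ => f (b + (k : Fin N))) (a - b).val
  simp only [Nat.cast_zero, add_zero, Fin.cast_val_eq_self, add_sub_cancel, Nat.cast_succ,
    ← add_assoc] at hpath
  calc dist (f b) (f a) ≤ ∑ k ∈ range (a - b).val, g (b + (k : Fin N) + 1) := by
        simpa only [g, add_sub_cancel_right] using hpath
    _ ≤ ∑ k ∈ range N, g (b + (k : Fin N) + 1) :=
        sum_le_sum_of_subset_of_nonneg (range_subset_range.mpr (a - b).isLt.le)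
          fun _ _ _ => dist_nonneg
    _ = ∑ k : Fin N, g (b + k + 1) := by
        simp only [← Fin.sum_univ_eq_sum_range, Fin.cast_val_eq_self]
    _ = ∑ j, g j := Equiv.sum_comp ((Equiv.addLeft b).trans (Equiv.addRight 1)) g

theorem abs_sub_average_le {ι : Type*} [Fintype ι] [Nonempty ι] (x : ι → ℝ) {c : ℝ}
    (h : ∀ k l, |x k - x l| ≤ c) (k : ι) : |x k - (∑ l, x l) / Fintype.card ι| ≤ c := by
  have hcard : (0 : ℝ) < Fintype.card ι := by exact_mod_cast Fintype.card_pos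
  have hsum : ∑ l, x l - x k * Fintype.card ι = ∑ l, (x l - x k) := by
    simp [sum_sub_distrib, mul_comm]
  rw [sub_div' hcard.ne', abs_div, abs_of_pos hcard, div_le_iff₀ hcard, abs_sub_comm, hsum]
  calc |∑ l, (x l - x k)| ≤ ∑ l, |x l - x k| := abs_sum_le_sum_abs _ _
    _ ≤ ∑ _l : ι, c := sum_le_sum fun l _ => h l k
    _ = c * Fintype.card ι := by simp [mul_comm]

section TotalVariation

variable {M N : ℕ} [NeZero M] [NeZero N] (u : Matrix (Fin M) (Fin N) ℝ)

theorem isoTV_nonneg : 0 ≤ isoTV u :=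
  sum_nonneg fun _ _ => sum_nonneg fun _ _ => Real.sqrt_nonneg _

theorem sum_sum_abs_gradx_le_isoTV : ∑ i, ∑ j, |gradx u i j| ≤ isoTV u :=
  sum_le_sum fun _ _ => sum_le_sum fun _ _ =>
    Real.abs_le_sqrt (le_add_of_nonneg_right (sq_nonneg _))

theorem sum_sum_abs_grady_le_isoTV : ∑ i, ∑ j, |grady u i j| ≤ isoTV u :=
  sum_le_sum fun _ _ => sum_le_sum fun _ _ =>
    Real.abs_le_sqrt (le_add_of_nonneg_left (sq_nonneg _))

theorem abs_sub_same_row_le_isoTV (i : Fin M) (j j' : Fin N) : |u i j' - u i j| ≤ isoTV u := by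
  calc |u i j' - u i j| = dist (u i j) (u i j') := by rw [Real.dist_eq, abs_sub_comm]
    _ ≤ ∑ j, |gradx u i j| := Fin.dist_le_sum_dist_sub_one (u i) j' j |>.trans_eq
        (sum_congr rfl fun _ _ => by rw [Real.dist_eq, abs_sub_comm]; rfl)
    _ ≤ ∑ i, ∑ j, |gradx u i j| :=
        single_le_sum (f := fun i => ∑ j, |gradx u i j|)
          (fun _ _ => sum_nonneg fun _ _ => abs_nonneg _) (mem_univ i)
    _ ≤ isoTV u := sum_sum_abs_gradx_le_isoTV u

theorem abs_sub_same_col_le_isoTV (i i' : Fin M) (j : Fin N) : |u i' j - u i j| ≤ isoTV u := by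
  calc |u i' j - u i j| = dist (u i j) (u i' j) := by rw [Real.dist_eq, abs_sub_comm]
    _ ≤ ∑ i, |grady u i j| := Fin.dist_le_sum_dist_sub_one (u · j) i' i |>.trans_eq
        (sum_congr rfl fun _ _ => by rw [Real.dist_eq, abs_sub_comm]; rfl)
    _ ≤ ∑ i, ∑ j, |grady u i j| := sum_le_sum fun i _ =>
        single_le_sum (f := fun j => |grady u i j|) (fun _ _ => abs_nonneg _) (mem_univ j)
    _ ≤ isoTV u := sum_sum_abs_grady_le_isoTV u

theorem abs_sub_le_two_mul_isoTV (i i' : Fin M) (j j' : Fin N) :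
    |u i' j' - u i j| ≤ 2 * isoTV u := by
  calc |u i' j' - u i j| ≤ |u i' j' - u i j'| + |u i j' - u i j| := abs_sub_le _ _ _
    _ ≤ isoTV u + isoTV u :=
        add_le_add (abs_sub_same_col_le_isoTV u i i' j') (abs_sub_same_row_le_isoTV u i j j')
    _ = 2 * isoTV u := (two_mul _).symm

end TotalVariation

theorem norm2_le_of_forall_abs_le {M N : ℕ} {v : Matrix (Fin M) (Fin N) ℝ} {c : ℝ}
    (hc : 0 ≤ c) (h : ∀ i j, |v i j| ≤ c) : norm2 v ≤ √(M * N) * c := by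
  rw [norm2, Real.sqrt_le_iff]
  refine ⟨by positivity, ?_⟩
  calc ∑ i, ∑ j, v i j ^ 2 ≤ ∑ _i : Fin M, ∑ _j : Fin N, c ^ 2 :=
        sum_le_sum fun i _ => sum_le_sum fun j _ =>
          sq_le_sq.mpr ((h i j).trans_eq (abs_of_nonneg hc).symm)
    _ = (√(M * N) * c) ^ 2 := by
        rw [mul_pow, Real.sq_sqrt (by positivity)]
        simp [mul_assoc]

/-- Discrete Poincaré inequality: ‖u - ū𝟙‖₂ ≤ C ‖∇u‖_{2,1}. -/
theorem discrete_poincare (M N : ℕ) [NeZero M] [NeZero N] :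
    ∃ C > 0, ∀ u : Matrix (Fin M) (Fin N) ℝ,
      norm2 (fun i j => u i j - (∑ i', ∑ j', u i' j') / (M * N)) ≤ C * isoTV u := by
  have hM := NeZero.pos M
  have hN := NeZero.pos N
  refine ⟨2 * √(M * N), by positivity, fun u => ?_⟩
  have hmean (i : Fin M) (j : Fin N) :
      |u i j - (∑ i', ∑ j', u i' j') / (M * N)| ≤ 2 * isoTV u := by
    simpa [Fintype.sum_prod_type] using
      abs_sub_average_le (fun p : Fin M × Fin N => u p.1 p.2)
        (fun p q => abs_sub_le_two_mul_isoTV u q.1 p.1 q.2 p.2) (i, j)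
  calc norm2 _ ≤ √(M * N) * (2 * isoTV u) :=
        norm2_le_of_forall_abs_le (mul_nonneg zero_le_two (isoTV_nonneg u)) hmean
    _ = 2 * √(M * N) * isoTV u := by ring
end

section
/- Existence of a global minimizer: Suppose f ∈ R^{M×N} with 0 < min_{i,j} f_{i,j} and ‖f‖_∞ < ∞, λ > 0, μ ≥ 0, α ∈ [0,1), and ker(A) ∩ ker(∇) = {0} for a linear operator A. Then the functional F(u) = λ⟨Au - f log(Au), 𝟙⟩ + (μ/2)‖∇u‖₂² + ‖∇u‖₁ - α‖∇u‖_{2,1} (defined where Au is entrywise positive) has a global minimizer. -/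
/-!
Along the sublevel set `{F ≤ F u₀}` the Poisson term `t ↦ t - f log t`, which is bounded below
and blows up both as `t → 0⁺` and as `t → ∞`, confines every entry of `Au` to a compact interval
of `(0, ∞)`, while `F ≥ const + (1 - α) ‖∇u‖₁` bounds the gradient. Since
`ker A ∩ ker ∇ = {0}`, the map `u ↦ (Au, ∇u)` is a closed embedding, so the sublevel set lies in
a compact subset of the domain on which `F` is continuous; a minimizer of `F` there is global.
-/

open scoped BigOperators

noncomputable def anisoTV {M N : ℕ} [NeZero M] [NeZero N]
    (u : Matrix (Fin M) (Fin N) ℝ) : ℝ :=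
  ∑ i, ∑ j, (|gradx u i j| + |grady u i j|)

noncomputable def gradSq {M N : ℕ} [NeZero M] [NeZero N]
    (u : Matrix (Fin M) (Fin N) ℝ) : ℝ :=
  ∑ i, ∑ j, ((gradx u i j) ^ 2 + (grady u i j) ^ 2)

noncomputable def poissonNLL (y t : ℝ) : ℝ := t - y * Real.log t

section PoissonNLL

variable {y t : ℝ}

theorem poissonNLL_self_le (hy : 0 < y) (ht : 0 < t) : poissonNLL y y ≤ poissonNLL y t := by
  have h := Real.log_le_sub_one_of_pos (div_pos ht hy)
  rw [Real.log_div ht.ne' hy.ne'] at h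
  have h2 : y * (t / y) = t := by field_simp
  unfold poissonNLL
  nlinarith [mul_le_mul_of_nonneg_left h hy.le]

/-- Comparing `log t` with its tangent line at `2 y` gives `poissonNLL y t ≥ t / 2 + const`. -/
theorem exists_sublevel_poissonNLL_subset_Icc (hy : 0 < y) (B : ℝ) :
    ∃ ε T : ℝ, 0 < ε ∧ ∀ t, 0 < t → poissonNLL y t ≤ B → t ∈ Set.Icc ε T := by
  refine ⟨Real.exp (-B / y), 2 * B - 2 * y + 2 * y * Real.log (2 * y), Real.exp_pos _,
    fun t ht h => ⟨?_, ?_⟩⟩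
  · rw [← Real.le_log_iff_exp_le ht, div_le_iff₀ hy]
    unfold poissonNLL at h
    nlinarith
  · have h1 := Real.log_le_sub_one_of_pos (div_pos ht (mul_pos two_pos hy))
    rw [Real.log_div ht.ne' (by positivity)] at h1
    have h2 : y * (t / (2 * y)) = t / 2 := by field_simp
    unfold poissonNLL at h
    nlinarith [mul_le_mul_of_nonneg_left h1 hy.le]

end PoissonNLL

theorem sub_le_sum_sub_sum {ι : Type*} [Fintype ι] {g l : ι → ℝ} (h : ∀ i, l i ≤ g i) (i : ι) :
    g i - l i ≤ ∑ j, g j - ∑ j, l j := by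
  rw [← Finset.sum_sub_distrib]
  exact Finset.single_le_sum (f := fun j => g j - l j) (fun j _ => sub_nonneg.2 (h j))
    (Finset.mem_univ i)

section TotalVariation

variable {M N : ℕ} [NeZero M] [NeZero N]

noncomputable def discreteGradient (M N : ℕ) [NeZero M] [NeZero N] :
    Matrix (Fin M) (Fin N) ℝ →ₗ[ℝ] Fin M → Fin N → ℝ × ℝ where
  toFun u i j := (gradx u i j, grady u i j)
  map_add' u v := by
    ext i j <;> simp only [gradx, grady, Matrix.add_apply, Pi.add_apply, Prod.fst_add,
      Prod.snd_add] <;> ring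
  map_smul' c u := by
    ext i j <;> simp only [gradx, grady, Matrix.smul_apply, smul_eq_mul, RingHom.id_apply,
      Pi.smul_apply, Prod.smul_fst, Prod.smul_snd] <;> ring

theorem anisoTV_nonneg (u : Matrix (Fin M) (Fin N) ℝ) : 0 ≤ anisoTV u := by
  unfold anisoTV; positivity

theorem gradSq_nonneg (u : Matrix (Fin M) (Fin N) ℝ) : 0 ≤ gradSq u := by
  unfold gradSq; positivity

theorem isoTV_le_anisoTV (u : Matrix (Fin M) (Fin N) ℝ) : isoTV u ≤ anisoTV u := by
  refine Finset.sum_le_sum fun i _ => Finset.sum_le_sum fun j _ => ?_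
  rw [Real.sqrt_le_left (by positivity), ← sq_abs (gradx u i j), ← sq_abs (grady u i j)]
  nlinarith [abs_nonneg (gradx u i j), abs_nonneg (grady u i j)]

theorem norm_discreteGradient_le_anisoTV (u : Matrix (Fin M) (Fin N) ℝ) :
    ‖discreteGradient M N u‖ ≤ anisoTV u := by
  refine (pi_norm_le_iff_of_nonneg (anisoTV_nonneg u)).2 fun i =>
    (pi_norm_le_iff_of_nonneg (anisoTV_nonneg u)).2 fun j => ?_
  calc ‖discreteGradient M N u i j‖ ≤ |gradx u i j| + |grady u i j| :=
        max_le_add_of_nonneg (abs_nonneg _) (abs_nonneg _)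
    _ ≤ ∑ j, (|gradx u i j| + |grady u i j|) :=
        Finset.single_le_sum (f := fun j => |gradx u i j| + |grady u i j|)
          (fun _ _ => by positivity) (Finset.mem_univ j)
    _ ≤ anisoTV u :=
        Finset.single_le_sum (f := fun i => ∑ j, (|gradx u i j| + |grady u i j|))
          (fun _ _ => by positivity) (Finset.mem_univ i)

theorem mul_anisoTV_le_regularizer {μ α : ℝ} (hμ : 0 ≤ μ) (hα : 0 ≤ α)
    (u : Matrix (Fin M) (Fin N) ℝ) :
    (1 - α) * anisoTV u ≤ μ / 2 * gradSq u + anisoTV u - α * isoTV u := by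
  nlinarith [mul_le_mul_of_nonneg_left (isoTV_le_anisoTV u) hα, gradSq_nonneg u]

end TotalVariation

theorem exists_bounds_of_energy_le {M N : ℕ} [NeZero M] [NeZero N]
    {f : Matrix (Fin M) (Fin N) ℝ} (hf : ∀ i j, 0 < f i j) {lam μ α : ℝ} (hlam : 0 < lam)
    (hμ : 0 ≤ μ) (hα0 : 0 ≤ α) (hα1 : α < 1) (c : ℝ) :
    ∃ ε T : Fin M → Fin N → ℝ, ∃ R : ℝ, (∀ i j, 0 < ε i j) ∧
      ∀ v u : Matrix (Fin M) (Fin N) ℝ, (∀ i j, 0 < v i j) →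
        lam * (∑ i, ∑ j, poissonNLL (f i j) (v i j)) + μ / 2 * gradSq u + anisoTV u
          - α * isoTV u ≤ c →
        (∀ i j, v i j ∈ Set.Icc (ε i j) (T i j)) ∧ anisoTV u ≤ R := by
  set L := ∑ i, ∑ j, poissonNLL (f i j) (f i j)
  choose ε T hε hεT using fun i j =>
    exists_sublevel_poissonNLL_subset_Icc (hf i j) (poissonNLL (f i j) (f i j) + (c / lam - L))
  refine ⟨ε, T, (c - lam * L) / (1 - α), hε, fun v u hv hc => ?_⟩
  set S := ∑ i, ∑ j, poissonNLL (f i j) (v i j)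
  have hentry i j : poissonNLL (f i j) (f i j) ≤ poissonNLL (f i j) (v i j) :=
    poissonNLL_self_le (hf i j) (hv i j)
  have hLS : L ≤ S := Finset.sum_le_sum fun i _ => Finset.sum_le_sum fun j _ => hentry i j
  have hreg := mul_anisoTV_le_regularizer hμ hα0 u
  have hTV := anisoTV_nonneg u
  have hSc : S ≤ c / lam := by rw [le_div_iff₀' hlam]; nlinarith
  refine ⟨fun i j => hεT i j _ (hv i j) ?_, ?_⟩
  · have := (sub_le_sum_sub_sum (hentry i) j).trans
      (sub_le_sum_sub_sum (fun i => Finset.sum_le_sum fun j _ => hentry i j) i)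
    linarith
  · rw [le_div_iff₀ (by linarith)]
    nlinarith

theorem exists_forall_le_of_sublevel_subset_isCompact {E β : Type*} [TopologicalSpace E]
    [LinearOrder β] [TopologicalSpace β] [ClosedIicTopology β] {F : E → β} {D K : Set E}
    {u₀ : E} (hu₀ : u₀ ∈ D) (hK : IsCompact K) (hKD : K ⊆ D)
    (hsub : ∀ u ∈ D, F u ≤ F u₀ → u ∈ K) (hF : ContinuousOn F K) :
    ∃ u ∈ D, ∀ v ∈ D, F u ≤ F v := by
  obtain ⟨u, huK, hmin⟩ := hK.exists_isMinOn ⟨u₀, hsub u₀ hu₀ le_rfl⟩ hF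
  refine ⟨u, hKD huK, fun v hv => ?_⟩
  rcases le_total (F v) (F u₀) with h | h
  · exact hmin (hsub v hv h)
  · exact (hmin (hsub u₀ hu₀ le_rfl)).trans h

theorem continuousOn_energy {M N : ℕ} [NeZero M] [NeZero N] (f : Matrix (Fin M) (Fin N) ℝ)
    (lam μ α : ℝ) (A : Matrix (Fin M) (Fin N) ℝ →ₗ[ℝ] Matrix (Fin M) (Fin N) ℝ) :
    ContinuousOn (fun u => lam * (∑ i, ∑ j, poissonNLL (f i j) (A u i j))
      + μ / 2 * gradSq u + anisoTV u - α * isoTV u) {u | ∀ i j, 0 < A u i j} := by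
  have hA : Continuous A := A.continuous_of_finiteDimensional
  have hAij i j : Continuous fun u => A u i j := by fun_prop
  have hdata : ContinuousOn (fun u => ∑ i, ∑ j, poissonNLL (f i j) (A u i j))
      {u | ∀ i j, 0 < A u i j} :=
    continuousOn_finsetSum _ fun i _ => continuousOn_finsetSum _ fun j _ =>
      (hAij i j).continuousOn.sub <| continuousOn_const.mul <|
        (hAij i j).continuousOn.log fun u hu => (hu i j).ne'
  unfold gradSq anisoTV isoTV gradx grady
  fun_prop

/-- Existence of a global minimizer of the AITV-regularized Poisson smoothing
functional F over the domain where Au is entrywise positive. -/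
theorem exists_global_minimizer (M N : ℕ) [NeZero M] [NeZero N]
    (f : Matrix (Fin M) (Fin N) ℝ) (hf : ∀ i j, 0 < f i j)
    (lam μ α : ℝ) (hlam : 0 < lam) (hμ : 0 ≤ μ) (hα0 : 0 ≤ α) (hα1 : α < 1)
    (A : Matrix (Fin M) (Fin N) ℝ →ₗ[ℝ] Matrix (Fin M) (Fin N) ℝ)
    (hker : ∀ u : Matrix (Fin M) (Fin N) ℝ,
      A u = 0 → (∀ i j, gradx u i j = 0 ∧ grady u i j = 0) → u = 0)
    (F : Matrix (Fin M) (Fin N) ℝ → ℝ)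
    (hF : ∀ u, F u = lam * (∑ i, ∑ j, ((A u) i j - f i j * Real.log ((A u) i j)))
        + μ / 2 * gradSq u + anisoTV u - α * isoTV u)
    (hne : ∃ u : Matrix (Fin M) (Fin N) ℝ, ∀ i j, 0 < (A u) i j) :
    ∃ uStar : Matrix (Fin M) (Fin N) ℝ, (∀ i j, 0 < (A uStar) i j) ∧
      ∀ u : Matrix (Fin M) (Fin N) ℝ, (∀ i j, 0 < (A u) i j) → F uStar ≤ F u := by
  obtain ⟨u₀, hu₀⟩ := hne
  obtain ⟨ε, T, R, hε, hbound⟩ := exists_bounds_of_energy_le hf hlam hμ hα0 hα1 (F u₀)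
  set Φ := A.prod (discreteGradient M N)
  have hΦ : LinearMap.ker Φ = ⊥ := by
    rw [LinearMap.ker_prod, eq_bot_iff]
    rintro u ⟨hAu, hgu⟩
    exact hker u hAu fun i j => Prod.ext_iff.1 (congrFun (congrFun hgu i) j)
  set box : Set (Matrix (Fin M) (Fin N) ℝ) :=
    Set.univ.pi fun i => Set.univ.pi fun j => Set.Icc (ε i j) (T i j)
  set K := Φ ⁻¹' (box ×ˢ Metric.closedBall 0 R)
  set D := {u : Matrix (Fin M) (Fin N) ℝ | ∀ i j, 0 < A u i j}
  have hKD : K ⊆ D := fun u hu i j => (hε i j).trans_le (hu.1 i trivial j trivial).1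
  have hFD : ContinuousOn F D := (continuousOn_energy f lam μ α A).congr fun u _ => hF u
  refine exists_forall_le_of_sublevel_subset_isCompact (K := K) hu₀ ?_ hKD ?_ (hFD.mono hKD)
  · exact (LinearMap.isClosedEmbedding_of_injective hΦ).isCompact_preimage
      ((isCompact_univ_pi fun i => isCompact_univ_pi fun j => isCompact_Icc).prod
        (isCompact_closedBall 0 R))
  · intro u hu hFu
    rw [hF u] at hFu
    obtain ⟨hAu, hTV⟩ := hbound (A u) u hu hFu
    exact ⟨fun i _ j _ => hAu i j,
      mem_closedBall_zero_iff.2 ((norm_discreteGradient_le_anisoTV u).trans hTV)⟩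
end

section
/- Closed form of the ℓ₁ - αℓ₂ proximal operator, case 1: Let x ∈ R^n, β > 0, α ∈ [0,1], and suppose ‖x‖_∞ > β. Define ξ = sign(x) ∘ max(|x| - β, 0) (soft-thresholding). Then x* = (‖ξ‖₂ + αβ)·ξ/‖ξ‖₂ is a minimizer of y ↦ ‖y‖₁ - α‖y‖₂ + (1/(2β))‖x - y‖₂². -/
/-!
Write `S = ‖ξ‖₂`, `u = ξ / S` and `x* = (S + αβ) u`. Soft thresholding gives `x = S u + v` with
`v = x - ξ ∈ β ∂‖·‖₁(x*)` (coordinatewise `|v i| ≤ β` and `v i x*_i = β |x*_i|`), which is the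
first-order condition for `x*`. The remaining concave term `-α‖y‖₂` is absorbed by the quadratic:
`‖y - m u‖² = (‖y‖ - m)² + 2m(‖y‖ - ⟪u, y⟫) ≥ 2αβ(‖y‖ - ⟪u, y⟫)` for `m = S + αβ ≥ αβ`,
by Cauchy–Schwarz.
-/

open scoped BigOperators

noncomputable def proxObj {n : ℕ} (x : Fin n → ℝ) (α β : ℝ) (y : Fin n → ℝ) : ℝ :=
  (∑ i, |y i|) - α * Real.sqrt (∑ i, (y i) ^ 2)
    + 1 / (2 * β) * ∑ i, (x i - y i) ^ 2

open RealInnerProductSpace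

noncomputable def softThreshold (β t : ℝ) : ℝ := Real.sign t * max (|t| - β) 0

theorem softThreshold_of_abs_le {β t : ℝ} (h : |t| ≤ β) : softThreshold β t = 0 := by
  simp [softThreshold, h]

theorem softThreshold_of_lt_abs {β t : ℝ} (h : β < |t|) :
    softThreshold β t = t - β * Real.sign t := by
  rcases lt_trichotomy t 0 with ht | rfl | ht
  · rw [softThreshold, max_eq_left (by linarith), Real.sign_of_neg ht, abs_of_neg ht]; ring
  · simp [softThreshold]
  · rw [softThreshold, max_eq_left (by linarith), Real.sign_of_pos ht, abs_of_pos ht]; ring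

theorem softThreshold_ne_zero {β t : ℝ} (hβ : 0 ≤ β) (h : β < |t|) : softThreshold β t ≠ 0 := by
  have ht : t ≠ 0 := by rintro rfl; rw [abs_zero] at h; linarith
  rw [softThreshold, max_eq_left (by linarith)]
  exact mul_ne_zero (Real.sign_eq_zero_iff.not.2 ht) (by linarith)

theorem abs_sub_softThreshold_le {β : ℝ} (hβ : 0 ≤ β) (t : ℝ) : |t - softThreshold β t| ≤ β := by
  rcases le_or_gt |t| β with h | h
  · rwa [softThreshold_of_abs_le h, sub_zero]
  · rcases Real.sign_apply_eq t with hs | hs | hs <;>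
      simp [softThreshold_of_lt_abs h, hs, abs_of_nonneg hβ, hβ]

theorem sub_softThreshold_mul_self (β t : ℝ) :
    (t - softThreshold β t) * softThreshold β t = β * |softThreshold β t| := by
  rcases le_or_gt |t| β with h | h
  · simp [softThreshold_of_abs_le h]
  · rw [softThreshold_of_lt_abs h]
    rcases lt_trichotomy t 0 with ht | rfl | ht
    · rw [abs_of_neg ht] at h
      rw [Real.sign_of_neg ht, abs_of_neg (by linarith)]; ring
    · simp
    · rw [abs_of_pos ht] at h
      rw [Real.sign_of_pos ht, abs_of_pos (by linarith)]; ring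

theorem mul_sum_abs_add_inner_le {ι : Type*} [Fintype ι] {β : ℝ} {v z : EuclideanSpace ℝ ι}
    (hv : ∀ i, |v i| ≤ β) (hvz : ∀ i, v i * z i = β * |z i|) (y : EuclideanSpace ℝ ι) :
    β * ∑ i, |z i| + ⟪v, y - z⟫ ≤ β * ∑ i, |y i| := by
  simp only [PiLp.inner_apply, PiLp.sub_apply, Finset.mul_sum, ← Finset.sum_add_distrib]
  refine Finset.sum_le_sum fun i _ => ?_
  calc β * |z i| + ⟪v i, y i - z i⟫ = v i * y i := by
        rw [Real.inner_apply]; linarith [hvz i]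
    _ ≤ |v i| * |y i| := by rw [← abs_mul]; exact le_abs_self _
    _ ≤ β * |y i| := mul_le_mul_of_nonneg_right (hv i) (abs_nonneg _)

section Prox

variable {E : Type*} [NormedAddCommGroup E] [InnerProductSpace ℝ E]

theorem norm_sub_smul_sq_of_norm_eq_one {u : E} (hu : ‖u‖ = 1) (y : E) (m : ℝ) :
    ‖y - m • u‖ ^ 2 = (‖y‖ - m) ^ 2 + 2 * m * (‖y‖ - ⟪u, y⟫) := by
  rw [norm_sub_sq_real, real_inner_smul_right, norm_smul, hu, mul_one, Real.norm_eq_abs, sq_abs,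
    real_inner_comm u y]
  ring

theorem prox_le_of_subgradient {g : E → ℝ} {x u v z : E} {α β s : ℝ} (hβ : 0 < β) (hα : 0 ≤ α)
    (hu : ‖u‖ = 1) (hs : 0 ≤ s) (hx : x = s • u + v) (hz : z = (s + α * β) • u)
    (hv : ∀ y, β * g z + ⟪v, y - z⟫ ≤ β * g y) (y : E) :
    g z - α * ‖z‖ + 1 / (2 * β) * ‖x - z‖ ^ 2 ≤ g y - α * ‖y‖ + 1 / (2 * β) * ‖x - y‖ ^ 2 := by
  have hm : 0 ≤ s + α * β := by positivity
  have hz_norm : ‖z‖ = s + α * β := by rw [hz, norm_smul, hu, Real.norm_of_nonneg hm, mul_one]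
  have hxz : x - z = v - (α * β) • u := by rw [hx, hz]; module
  have hexpand : ‖x - y‖ ^ 2 = ‖x - z‖ ^ 2 - 2 * ⟪x - z, y - z⟫ + ‖y - z‖ ^ 2 := by
    rw [← norm_sub_sq_real, sub_sub_sub_cancel_right]
  have hinner : ⟪x - z, y - z⟫ = ⟪v, y - z⟫ - α * β * (⟪u, y⟫ - (s + α * β)) := by
    rw [hxz, hz]
    simp only [inner_sub_left, inner_sub_right, real_inner_smul_left,
      real_inner_smul_right, real_inner_self_eq_norm_sq, hu]
    ring
  have hcs : ⟪u, y⟫ ≤ ‖y‖ := by simpa [hu] using real_inner_le_norm u y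
  have hyz := norm_sub_smul_sq_of_norm_eq_one hu y (s + α * β)
  rw [← hz] at hyz
  have key : 2 * α * β * (‖y‖ - ⟪u, y⟫) ≤ ‖y - z‖ ^ 2 := by
    rw [hyz]; nlinarith [sq_nonneg (‖y‖ - (s + α * β)), mul_nonneg hs (sub_nonneg.2 hcs)]
  have hsub := hv y
  rw [hz_norm, hexpand, hinner]
  field_simp
  linarith

end Prox

theorem proxObj_eq {n : ℕ} (x : Fin n → ℝ) (α β : ℝ) (y : Fin n → ℝ) :
    proxObj x α β y = (∑ i, |y i|) - α * ‖(WithLp.toLp 2 y : EuclideanSpace ℝ (Fin n))‖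
      + 1 / (2 * β) * ‖(WithLp.toLp 2 x - WithLp.toLp 2 y : EuclideanSpace ℝ (Fin n))‖ ^ 2 := by
  rw [proxObj, EuclideanSpace.real_norm_sq_eq, EuclideanSpace.norm_eq]
  simp

theorem prox_l1_minus_alpha_l2_case1_general (n : ℕ) (x : Fin n → ℝ) (α β : ℝ)
    (hβ : 0 < β) (hα0 : 0 ≤ α)
    (hx : ∃ i, β < |x i|)
    (ξ : Fin n → ℝ) (hξ : ∀ i, ξ i = Real.sign (x i) * max (|x i| - β) 0)
    (xStar : Fin n → ℝ)
    (hxStar : ∀ i, xStar i =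
      (Real.sqrt (∑ j, (ξ j) ^ 2) + α * β) * ξ i / Real.sqrt (∑ j, (ξ j) ^ 2)) :
    ∀ y : Fin n → ℝ, proxObj x α β xStar ≤ proxObj x α β y := by
  intro y
  have hsoft : ∀ j, ξ j = softThreshold β (x j) := hξ
  set ξE : EuclideanSpace ℝ (Fin n) := WithLp.toLp 2 ξ
  have hS : ‖ξE‖ = Real.sqrt (∑ j, ξ j ^ 2) := by simp [ξE, EuclideanSpace.norm_eq]
  obtain ⟨i, hi⟩ := hx
  have hξE : ξE ≠ 0 := fun h => softThreshold_ne_zero hβ.le hi <| by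
    rw [← hsoft]; simpa using congrArg (· i) h
  have hS0 : ‖ξE‖ ≠ 0 := norm_ne_zero_iff.2 hξE
  have hxStar' : ∀ j, xStar j = ((‖ξE‖ + α * β) / ‖ξE‖) * ξ j := fun j => by
    rw [hxStar, hS]; ring
  rw [proxObj_eq, proxObj_eq]
  refine prox_le_of_subgradient (g := fun v => ∑ i, |v i|) (u := ‖ξE‖⁻¹ • ξE) (s := ‖ξE‖)
    (v := WithLp.toLp 2 x - ξE) hβ hα0 (norm_smul_inv_norm hξE) (norm_nonneg _) ?_ ?_ ?_ _
  · rw [smul_smul, mul_inv_cancel₀ hS0, one_smul, add_sub_cancel]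
  · ext j; simp only [hxStar' j, PiLp.smul_apply, smul_eq_mul, ξE]; ring
  · refine mul_sum_abs_add_inner_le (fun j => ?_) (fun j => ?_)
    · simpa [ξE, hsoft] using abs_sub_softThreshold_le hβ.le (x j)
    · have hc : 0 ≤ (‖ξE‖ + α * β) / ‖ξE‖ := by positivity
      simp only [ξE, PiLp.sub_apply, hxStar', abs_mul, abs_of_nonneg hc, hsoft]
      linear_combination ((‖ξE‖ + α * β) / ‖ξE‖) * sub_softThreshold_mul_self β (x j)

/-- Closed form of the ℓ₁ - αℓ₂ proximal operator, case ‖x‖_∞ > β: with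
ξ = sign(x) ∘ max(|x| - β, 0), the vector (‖ξ‖₂ + αβ)ξ/‖ξ‖₂ is a minimizer. -/
theorem prox_l1_minus_alpha_l2_case1 (n : ℕ) (x : Fin n → ℝ) (α β : ℝ)
    (hβ : 0 < β) (hα0 : 0 ≤ α) (hα1 : α ≤ 1)
    (hx : ∃ i, β < |x i|)
    (ξ : Fin n → ℝ) (hξ : ∀ i, ξ i = Real.sign (x i) * max (|x i| - β) 0)
    (xStar : Fin n → ℝ)
    (hxStar : ∀ i, xStar i =
      (Real.sqrt (∑ j, (ξ j) ^ 2) + α * β) * ξ i / Real.sqrt (∑ j, (ξ j) ^ 2)) :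
    ∀ y : Fin n → ℝ, proxObj x α β xStar ≤ proxObj x α β y :=
  prox_l1_minus_alpha_l2_case1_general n x α β hβ hα0 hx ξ hξ xStar hxStar
end

section
/- Closed form of the ℓ₁ - αℓ₂ proximal operator, case 3: Let x ∈ R^n, β > 0, α ∈ [0,1]. If ‖x‖_∞ ≤ (1-α)β, then y = 0 is a global minimizer of y ↦ ‖y‖₁ - α‖y‖₂ + (1/(2β))‖x - y‖₂². -/
open scoped BigOperators

section FiniteSums

variable {ι : Type*} [Fintype ι]

lemma sqrt_sum_sq_le_sum_abs (y : ι → ℝ) : Real.sqrt (∑ i, y i ^ 2) ≤ ∑ i, |y i| :=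
  calc Real.sqrt (∑ i, y i ^ 2) = Real.sqrt (∑ i, |y i| ^ 2) := by simp only [sq_abs]
    _ ≤ Real.sqrt ((∑ i, |y i|) ^ 2) :=
      Real.sqrt_le_sqrt (Finset.sum_sq_le_sq_sum_of_nonneg fun i _ => abs_nonneg _)
    _ = ∑ i, |y i| := Real.sqrt_sq (Finset.sum_nonneg fun i _ => abs_nonneg _)

lemma sum_mul_le_mul_sum_abs {x : ι → ℝ} {c : ℝ} (hx : ∀ i, |x i| ≤ c) (y : ι → ℝ) :
    ∑ i, x i * y i ≤ c * ∑ i, |y i| := by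
  rw [Finset.mul_sum]
  refine Finset.sum_le_sum fun i _ => ?_
  calc x i * y i ≤ |x i| * |y i| := (le_abs_self _).trans (abs_mul _ _).le
    _ ≤ c * |y i| := mul_le_mul_of_nonneg_right (hx i) (abs_nonneg _)

lemma sum_sub_sq_eq (x y : ι → ℝ) :
    ∑ i, (x i - y i) ^ 2 = ∑ i, x i ^ 2 - 2 * ∑ i, x i * y i + ∑ i, y i ^ 2 := by
  rw [Finset.mul_sum, ← Finset.sum_sub_distrib, ← Finset.sum_add_distrib]
  exact Finset.sum_congr rfl fun i _ => by ring

end FiniteSums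

lemma proxObj_sub_proxObj_zero {n : ℕ} (x : Fin n → ℝ) (α β : ℝ) (y : Fin n → ℝ) :
    proxObj x α β y - proxObj x α β 0 = (∑ i, |y i|) - α * Real.sqrt (∑ i, y i ^ 2)
      + 1 / (2 * β) * (∑ i, y i ^ 2 - 2 * ∑ i, x i * y i) := by
  simp only [proxObj, sum_sub_sq_eq, Pi.zero_apply, abs_zero, Finset.sum_const_zero, sub_zero,
    mul_zero, ne_eq, OfNat.ofNat_ne_zero, not_false_eq_true, zero_pow, Real.sqrt_zero]
  ring

theorem prox_l1_minus_alpha_l2_case3_general (n : ℕ) (x : Fin n → ℝ) (α β : ℝ)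
    (hβ : 0 < β) (hα0 : 0 ≤ α)
    (hx : ∀ i, |x i| ≤ (1 - α) * β) :
    ∀ y : Fin n → ℝ, proxObj x α β 0 ≤ proxObj x α β y := by
  intro y
  have hnorm := sqrt_sum_sq_le_sum_abs y
  have hinner := sum_mul_le_mul_sum_abs hx y
  have hsq : 0 ≤ ∑ i, y i ^ 2 := Finset.sum_nonneg fun i _ => sq_nonneg _
  have hquad : -(1 - α) * ∑ i, |y i| ≤ 1 / (2 * β) * (∑ i, y i ^ 2 - 2 * ∑ i, x i * y i) := by
    rw [div_mul_eq_mul_div, one_mul, le_div_iff₀ (by positivity)]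
    linarith
  rw [← sub_nonneg, proxObj_sub_proxObj_zero]
  linarith [mul_le_mul_of_nonneg_left hnorm hα0]

/-- Closed form of the ℓ₁ - αℓ₂ proximal operator, case ‖x‖_∞ ≤ (1-α)β:
y = 0 is a global minimizer. -/
theorem prox_l1_minus_alpha_l2_case3 (n : ℕ) (x : Fin n → ℝ) (α β : ℝ)
    (hβ : 0 < β) (hα0 : 0 ≤ α) (hα1 : α ≤ 1)
    (hx : ∀ i, |x i| ≤ (1 - α) * β) :
    ∀ y : Fin n → ℝ, proxObj x α β 0 ≤ proxObj x α β y :=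
  prox_l1_minus_alpha_l2_case3_general n x α β hβ hα0 hx
end
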